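/- Let F be a finite field of characteristic p and order q, and let d be an invertible exponent over F. Then {W_{F,d}(a) : a ∈ F, a ≠ 0} ⊆ ℤ if and only if d ≡ 1 (mod p−1). -/

import Mathlib

/-!
Values of `ψ` are powers of `ζₚ = exp(2πi/p)`, and since `1 + X + ⋯ + X^(p-1)` is the minimal
polynomial of `ζₚ`, a relation `∑ⱼ Aⱼ ζₚ^j = 0` with rational `Aⱼ` forces all `Aⱼ` to be equal.
Hence the Galois action `ζₚ ↦ ζₚ^t`, which is `ψ(x) ↦ ψ(t • x)` for `t ∈ 𝔽ₚˣ`, preserves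
`ℚ`-linear relations between values of `ψ`.

If `t^d = t` on `𝔽ₚ`, then `x ↦ x^d - a x` commutes with scaling by `𝔽ₚˣ`, so the number `Nⱼ`
of `x` with `Tr(x^d - a x) = j` is the same for all `j ≠ 0`, and `W(a) = N₀ - N₁`.
Conversely, if all `W(a)` are integers (`W(0) = 0` since `x ↦ x^d` is bijective), applying the
Galois action to the Fourier inversion `∑ₐ W(a) ψ(c a) = q ψ(c^d)` gives
`ψ(t c^d) = ψ(t^d c^d)`, so `t^d = t` for all `t ∈ 𝔽ₚˣ` because `ψ` is primitive; and
`t^d = t` on `𝔽ₚˣ` means `d ≡ 1 (mod p - 1)`.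
-/

open scoped BigOperators

/-- The canonical additive character of a finite field `F` of characteristic `p`:
`ψ(x) = exp(2πi·Tr(x)/p)`, where `Tr` is the absolute trace from `F` to `𝔽_p = ZMod p`. -/
noncomputable def canonicalPsi (F : Type*) [Field F] [Fintype F] (p : ℕ) [CharP F p]
    (x : F) : ℂ :=
  letI : Algebra (ZMod p) F := ZMod.algebra F p
  Complex.exp (2 * Real.pi * Complex.I * ((Algebra.trace (ZMod p) F x).val : ℂ) / (p : ℂ))

/-- The Weil sum `W_{F,d}(a) = ∑_{x ∈ F} ψ(x^d − a·x)`. -/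
noncomputable def weilSum (F : Type*) [Field F] [Fintype F] (p : ℕ) [CharP F p]
    (d : ℕ) (a : F) : ℂ :=
  ∑ x : F, canonicalPsi F p (x ^ d - a * x)

open Finset Polynomial

attribute [local instance] ZMod.algebra

namespace ZMod

variable {p : ℕ} [Fact p.Prime]

theorem forall_pow_eq_self_iff_modEq {d : ℕ} :
    (∀ t : ZMod p, t ≠ 0 → t ^ d = t) ↔ d ≡ 1 [MOD p - 1] := by
  constructor
  · intro h
    obtain ⟨g, hg⟩ := IsCyclic.exists_generator (α := (ZMod p)ˣ)
    have hord : orderOf g = p - 1 := by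
      rw [orderOf_eq_card_of_forall_mem_zpowers hg, Nat.card_eq_fintype_card, card_units]
    have hgd : g ^ d = g ^ 1 := Units.ext <| by simpa using h g g.ne_zero
    exact hord ▸ pow_eq_pow_iff_modEq.mp hgd
  · intro hd t ht
    let u := Units.mk0 t ht
    have hdvd : orderOf u ∣ p - 1 := card_units p ▸ orderOf_dvd_card
    have hud : u ^ d = u ^ 1 := pow_eq_pow_iff_modEq.mpr (hd.of_dvd hdvd)
    simpa [u] using congrArg Units.val hud

lemma stdAddChar_eq_pow_val {N : ℕ} [NeZero N] (j : ZMod N) :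
    stdAddChar j = stdAddChar (1 : ZMod N) ^ j.val := by
  rw [← AddChar.map_nsmul_eq_pow, nsmul_one, natCast_zmod_val]

lemma isPrimitiveRoot_stdAddChar_one {N : ℕ} [NeZero N] :
    IsPrimitiveRoot (stdAddChar (1 : ZMod N)) N := by
  have h := stdAddChar_coe (N := N) 1
  rw [Int.cast_one, Int.cast_one, mul_one] at h
  exact h ▸ Complex.isPrimitiveRoot_exp N (NeZero.ne N)

theorem eq_of_sum_mul_stdAddChar_eq_zero (A : ZMod p → ℚ)
    (h : ∑ j, (A j : ℂ) * stdAddChar j = 0) (j k : ZMod p) : A j = A k := by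
  have hp := (Fact.out : p.Prime)
  let P : ℚ[X] := ∑ i : ZMod p, C (A i) * X ^ i.val
  have hcoeff (i : ZMod p) : P.coeff i.val = A i := by
    simp [P, finsetSum_coeff, (val_injective p).eq_iff]
  have hroot : aeval (stdAddChar (1 : ZMod p)) P = 0 := by
    simpa [P, ← stdAddChar_eq_pow_val] using h
  have hdvd : cyclotomic p ℚ ∣ P := by
    rw [cyclotomic_eq_minpoly_rat isPrimitiveRoot_stdAddChar_one hp.pos]
    exact minpoly.dvd ℚ _ hroot
  have hdeg : P.natDegree ≤ (cyclotomic p ℚ).natDegree := by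
    rw [natDegree_cyclotomic, Nat.totient_prime hp]
    refine natDegree_sum_le_of_forall_le _ _ fun i _ => (natDegree_C_mul_X_pow_le _ _).trans ?_
    have := val_lt i
    omega
  have hP := eq_leadingCoeff_mul_of_monic_of_dvd_of_natDegree_le
    (cyclotomic.monic p ℚ) hdvd hdeg
  have hcyc (i : ZMod p) : (cyclotomic p ℚ).coeff i.val = 1 := by
    simp [cyclotomic_prime, finsetSum_coeff, coeff_X_pow, val_lt]
  rw [← hcoeff j, ← hcoeff k, hP, coeff_C_mul, coeff_C_mul, hcyc, hcyc]

/-- The Galois automorphism `ζₚ ↦ ζₚ ^ t` of `ℚ(ζₚ)` preserves `ℚ`-linear relations. -/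
theorem sum_mul_stdAddChar_mul_eq_zero (A : ZMod p → ℚ)
    (h : ∑ j, (A j : ℂ) * stdAddChar j = 0) {t : ZMod p} (ht : t ≠ 0) :
    ∑ j, (A j : ℂ) * stdAddChar (t * j) = 0 := by
  simp_rw [eq_of_sum_mul_stdAddChar_eq_zero A h _ 0, ← mul_sum, mul_comm t]
  simp [AddChar.sum_mulShift t (isPrimitive_stdAddChar p), ht]

end ZMod

lemma Finset.sum_mul_comp_eq_sum_fiberwise {ι κ R : Type*} [Fintype ι] [Fintype κ]
    [DecidableEq κ] [NonUnitalNonAssocSemiring R] (n : ι → R) (g : ι → κ) (φ : κ → R) :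
    ∑ i, n i * φ (g i) = ∑ k, (∑ i with g i = k, n i) * φ k := by
  rw [← Finset.sum_fiberwise univ g]
  refine sum_congr rfl fun k _ => ?_
  rw [sum_mul]
  exact sum_congr rfl fun i hi => by rw [(mem_filter.mp hi).2]

section CanonicalAddChar

variable (F : Type*) [Field F] (p : ℕ) [Fact p.Prime] [CharP F p]

noncomputable def canonicalAddChar : AddChar F ℂ :=
  ZMod.stdAddChar.compAddMonoidHom (Algebra.trace (ZMod p) F).toAddMonoidHom

variable {F p}

lemma canonicalAddChar_apply (x : F) :
    canonicalAddChar F p x = ZMod.stdAddChar (Algebra.trace (ZMod p) F x) := rfl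

lemma canonicalAddChar_smul (t : ZMod p) (x : F) :
    canonicalAddChar F p (t • x) = ZMod.stdAddChar (t * Algebra.trace (ZMod p) F x) := by
  rw [canonicalAddChar_apply, map_smul, smul_eq_mul]

theorem sum_mul_canonicalAddChar_smul_eq_zero {ι : Type*} [Fintype ι] (n : ι → ℚ) (y : ι → F)
    (h : ∑ i, (n i : ℂ) * canonicalAddChar F p (y i) = 0) {t : ZMod p} (ht : t ≠ 0) :
    ∑ i, (n i : ℂ) * canonicalAddChar F p (t • y i) = 0 := by
  let A : ZMod p → ℚ := fun j => ∑ i with Algebra.trace (ZMod p) F (y i) = j, n i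
  have hA : ∑ j, (A j : ℂ) * ZMod.stdAddChar j = 0 := by
    simp_rw [canonicalAddChar_apply] at h
    rw [sum_mul_comp_eq_sum_fiberwise] at h
    exact_mod_cast h
  simp_rw [canonicalAddChar_smul]
  rw [sum_mul_comp_eq_sum_fiberwise _ _ fun j => ZMod.stdAddChar (t * j)]
  exact_mod_cast ZMod.sum_mul_stdAddChar_mul_eq_zero A hA ht

variable [Fintype F]

lemma canonicalPsi_eq_canonicalAddChar (x : F) : canonicalPsi F p x = canonicalAddChar F p x := by
  rw [canonicalAddChar_apply, ZMod.stdAddChar_apply, ZMod.toCircle_apply, canonicalPsi]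

lemma isPrimitive_canonicalAddChar : (canonicalAddChar F p).IsPrimitive := by
  refine AddChar.IsPrimitive.of_ne_one fun h => ?_
  obtain ⟨x, hx⟩ := Algebra.trace_surjective (ZMod p) F 1
  have := DFunLike.congr_fun h x
  rw [canonicalAddChar_apply, hx, AddChar.one_apply,
    ← AddChar.map_zero_eq_one (ZMod.stdAddChar (N := p)), ZMod.injective_stdAddChar.eq_iff] at this
  exact one_ne_zero this

theorem exists_sum_canonicalAddChar_eq_intCast {f : F → F}
    (hf : ∀ t : ZMod p, t ≠ 0 → ∀ x, f (t • x) = t • f x) :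
    ∃ n : ℤ, ∑ x, canonicalAddChar F p (f x) = n := by
  let g : F → ZMod p := fun x => Algebra.trace (ZMod p) F (f x)
  let N : ZMod p → ℕ := fun j => #{x | g x = j}
  have hN (j : ZMod p) (hj : j ≠ 0) : N j = N 1 := by
    refine (card_equiv (MulAction.toPerm (Units.mk0 j hj)) fun x => ?_).symm
    simp [g, Units.smul_def, hf j hj, hj]
  have hsum : ∑ x, canonicalAddChar F p (f x) = ∑ j, (N j : ℂ) * ZMod.stdAddChar j := by
    simpa [N, canonicalAddChar_apply] using
      sum_mul_comp_eq_sum_fiberwise (fun _ => (1 : ℂ)) g ZMod.stdAddChar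
  have hchar : ∑ j : ZMod p, ZMod.stdAddChar j = 0 := by
    simpa using AddChar.sum_mulShift 1 (ZMod.isPrimitive_stdAddChar p)
  refine ⟨N 0 - N 1, ?_⟩
  calc ∑ x, canonicalAddChar F p (f x)
      = ∑ j, ((N j : ℂ) - N 1) * ZMod.stdAddChar j + N 1 * ∑ j, ZMod.stdAddChar j := by
        rw [hsum, mul_sum, ← sum_add_distrib]
        exact sum_congr rfl fun j _ => by ring
    _ = ((N 0 : ℂ) - N 1) * ZMod.stdAddChar 0 := by
        rw [hchar, mul_zero, add_zero]
        exact Fintype.sum_eq_single 0 fun j hj => by rw [hN j hj, sub_self, zero_mul]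
    _ = _ := by simp

end CanonicalAddChar

lemma FiniteField.pow_left_injective_of_coprime {F : Type*} [Field F] [Fintype F] {d : ℕ}
    (hd : 0 < d) (hcop : d.Coprime (Fintype.card F - 1)) :
    Function.Injective fun x : F => x ^ d := by
  intro x y (hxy : x ^ d = y ^ d)
  rcases eq_or_ne y 0 with rfl | hy
  · exact pow_eq_zero_iff hd.ne' |>.mp (hxy.trans (zero_pow hd.ne'))
  have hx : x ≠ 0 := by
    rintro rfl
    exact hy (pow_eq_zero_iff hd.ne' |>.mp (hxy.symm.trans (zero_pow hd.ne')))
  have hd1 : (x / y) ^ d = 1 := by rw [div_pow, hxy, div_self (pow_ne_zero _ hy)]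
  have hq1 : (x / y) ^ (Fintype.card F - 1) = 1 :=
    FiniteField.pow_card_sub_one_eq_one _ (div_ne_zero hx hy)
  have := pow_gcd_eq_one.mpr ⟨hd1, hq1⟩
  rwa [hcop.gcd_eq_one, pow_one, div_eq_one_iff_eq hy] at this

section WeilSum

variable {F : Type*} [Field F] [Fintype F] {p : ℕ} [Fact p.Prime] [CharP F p] {d : ℕ}

lemma weilSum_eq_sum_canonicalAddChar (a : F) :
    weilSum F p d a = ∑ x, canonicalAddChar F p (x ^ d - a * x) := by
  simp_rw [weilSum, canonicalPsi_eq_canonicalAddChar]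

theorem sum_weilSum_mul_canonicalAddChar (c : F) :
    ∑ a, weilSum F p d a * canonicalAddChar F p (c * a)
      = Fintype.card F * canonicalAddChar F p (c ^ d) := by
  classical
  calc ∑ a, weilSum F p d a * canonicalAddChar F p (c * a)
      = ∑ x, canonicalAddChar F p (x ^ d) * ∑ a, canonicalAddChar F p (a * (c - x)) := by
        simp_rw [weilSum_eq_sum_canonicalAddChar, sum_mul, mul_sum]
        rw [sum_comm]
        refine sum_congr rfl fun x _ => sum_congr rfl fun a _ => ?_
        rw [← AddChar.map_add_eq_mul, ← AddChar.map_add_eq_mul]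
        ring_nf
    _ = _ := by simp [AddChar.sum_mulShift _ isPrimitive_canonicalAddChar, sub_eq_zero, mul_comm]

lemma weilSum_zero_eq_zero (hinj : Function.Injective fun x : F => x ^ d) :
    weilSum F p d 0 = 0 := by
  classical
  rw [weilSum_eq_sum_canonicalAddChar]
  simp only [zero_mul, sub_zero]
  rw [Fintype.sum_bijective _ (Finite.injective_iff_bijective.mp hinj) _ (canonicalAddChar F p)
    fun _ => rfl]
  simpa using AddChar.sum_mulShift 1 (isPrimitive_canonicalAddChar (F := F) (p := p))

theorem exists_weilSum_eq_intCast (h : ∀ t : ZMod p, t ≠ 0 → t ^ d = t) (a : F) :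
    ∃ n : ℤ, weilSum F p d a = n := by
  rw [weilSum_eq_sum_canonicalAddChar]
  refine exists_sum_canonicalAddChar_eq_intCast fun t ht x => ?_
  rw [_root_.smul_pow, h t ht, smul_sub, mul_smul_comm]

theorem canonicalAddChar_smul_pow_eq_of_forall_weilSum_eq_intCast
    (H : ∀ a : F, ∃ n : ℤ, weilSum F p d a = n) {t : ZMod p} (ht : t ≠ 0) (c : F) :
    canonicalAddChar F p (t • c ^ d) = canonicalAddChar F p (t ^ d • c ^ d) := by
  choose n hn using H
  have hW (c : F) : ∑ a, (n a : ℂ) * canonicalAddChar F p (c * a)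
      = Fintype.card F * canonicalAddChar F p (c ^ d) := by
    simpa [hn] using sum_weilSum_mul_canonicalAddChar (d := d) c
  -- `hW c` as a ℚ-linear relation between values of the character, indexed by `Option F`
  let m : Option F → ℚ := fun o => o.elim (-(Fintype.card F : ℚ)) fun a => n a
  let y : Option F → F := fun o => o.elim (c ^ d) fun a => c * a
  have hrel : ∑ o, (m o : ℂ) * canonicalAddChar F p (y o) = 0 := by
    simp [m, y, Fintype.sum_option, hW]
  have := sum_mul_canonicalAddChar_smul_eq_zero m y hrel ht
  simp only [m, y, Fintype.sum_option, Option.elim, Rat.cast_neg, Rat.cast_natCast,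
    Rat.cast_intCast, ← smul_mul_assoc, hW, _root_.smul_pow] at this
  have hq : (Fintype.card F : ℂ) ≠ 0 := Nat.cast_ne_zero.mpr Fintype.card_ne_zero
  exact mul_left_cancel₀ hq (by linear_combination -this)

theorem pow_eq_self_of_forall_weilSum_eq_intCast (hinj : Function.Injective fun x : F => x ^ d)
    (H : ∀ a : F, a ≠ 0 → ∃ n : ℤ, weilSum F p d a = n) {t : ZMod p} (ht : t ≠ 0) :
    t ^ d = t := by
  have H' (a : F) : ∃ n : ℤ, weilSum F p d a = n := by
    rcases eq_or_ne a 0 with rfl | ha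
    · exact ⟨0, by simp [weilSum_zero_eq_zero hinj]⟩
    · exact H a ha
  have hshift : (canonicalAddChar F p).mulShift (algebraMap (ZMod p) F t)
      = (canonicalAddChar F p).mulShift (algebraMap (ZMod p) F (t ^ d)) := by
    ext w
    obtain ⟨c, rfl⟩ := Finite.injective_iff_surjective.mp hinj w
    simpa only [AddChar.mulShift_apply, ← Algebra.smul_def] using
      canonicalAddChar_smul_pow_eq_of_forall_weilSum_eq_intCast H' ht c
  exact ((algebraMap (ZMod p) F).injective
    (AddChar.to_mulShift_inj_of_isPrimitive isPrimitive_canonicalAddChar hshift)).symm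

end WeilSum

/-- The Weil spectrum consists of integers if and only if `d ≡ 1 (mod p−1)`. -/
theorem weilSpectrum_subset_int_iff (F : Type*) [Field F] [Fintype F]
    (p : ℕ) [Fact p.Prime] [CharP F p] (d : ℕ) (hd : 0 < d)
    (hgcd : Nat.gcd d (Fintype.card F - 1) = 1) :
    {w : ℂ | ∃ a : F, a ≠ 0 ∧ weilSum F p d a = w} ⊆ Set.range ((↑) : ℤ → ℂ) ↔
      d ≡ 1 [MOD p - 1] := by
  have hinj := FiniteField.pow_left_injective_of_coprime hd hgcd
  rw [← ZMod.forall_pow_eq_self_iff_modEq]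
  constructor
  · intro hsub t ht
    refine pow_eq_self_of_forall_weilSum_eq_intCast hinj (fun a ha => ?_) ht
    obtain ⟨n, hn⟩ := hsub ⟨a, ha, rfl⟩
    exact ⟨n, hn.symm⟩
  · rintro h _ ⟨a, -, rfl⟩
    obtain ⟨n, hn⟩ := exists_weilSum_eq_intCast h a
    exact ⟨n, hn.symm⟩
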